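/- For all γ, ω ∈ ℝ, the spectra of the kagome operators satisfy σ_{γ,ω+π/4} = σ_{γ−6π,ω} and σ_{γ,−ω} = σ_{−γ,ω}. Consequently, to obtain all the spectra σ_{γ,ω} it suffices to consider ω ∈ [0,π/8]. -/

import Mathlib

/-! Both identities are unitary equivalences. Every phase of `Q_{γ,ω}` is `p^{±1}` times an
integer power of `h`, where `p = e^{i(ω+γ/8)}` and `h = e^{iγ/2}`. The shift
`(γ, ω) ↦ (γ + 6π, ω + π/4)` replaces `(p, h)` by `(-p, -h)`, which the sign gauge `(-1)^{a+b}`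
undoes. The reflection `(γ, ω) ↦ (-γ, -ω)` replaces `(p, h)` by `(p⁻¹, h⁻¹)`, which is undone by
the lattice reflection `(a, b) ↦ (-b, -a)` exchanging the first and third sublattice, combined
with the Landau gauge `h^{-2ab}`. Unitarily equivalent operators have the same spectrum, and
reducing `ω` modulo `π/4`, followed if necessary by a reflection, brings `ω` into `[0, π/8]`. -/

open Complex Matrix

noncomputable section

/-- `ℓ²(ℤ²;ℂ³)`. -/
abbrev KH : Type := lp (fun _ : ℤ × ℤ => EuclideanSpace ℂ (Fin 3)) 2

/-- `Q` is the kagome operator `Q_{γ,ω}`, written entrywise: the three components of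
`ℂ³` correspond to the labels `1,3,5` of the kagome lattice, the magnetic translations are
`(τ₁v)_α = v_{α₁−1,α₂}`, `(τ₂v)_α = e^{iγα₁}v_{α₁,α₂−1}`, and `Q_{γ,ω}` has zero diagonal
blocks and off-diagonal blocks `Q₁₂ = e^{i(ω+γ/8)}(τ₁* + e^{−iγ/2}τ₁*τ₂)`,
`Q₁₃ = e^{−i(ω+γ/8)}(τ₁* + τ₂*)`, `Q₂₁ = e^{−i(ω+γ/8)}(τ₁ + e^{−iγ/2}τ₁τ₂*)`,
`Q₂₃ = e^{i(ω+γ/8)}(e^{−iγ/2}τ₁τ₂* + τ₂*)`, `Q₃₁ = e^{i(ω+γ/8)}(τ₁ + τ₂)`,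
`Q₃₂ = e^{−i(ω+γ/8)}(e^{−iγ/2}τ₁*τ₂ + τ₂)`. -/
def IsKagome (γ ω : ℝ) (Q : KH →L[ℂ] KH) : Prop :=
  ∀ v : KH, ∀ a b : ℤ,
    (Q v) (a, b) 0 =
        Complex.exp (Complex.I * ((ω : ℂ) + (γ : ℂ)/8)) *
          (v (a+1, b) 1 +
            Complex.exp (Complex.I * (-((γ : ℂ)/2) + (γ : ℂ) * ((a : ℂ)+1))) * v (a+1, b-1) 1)
      + Complex.exp (-(Complex.I * ((ω : ℂ) + (γ : ℂ)/8))) *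
          (v (a+1, b) 2 + Complex.exp (-(Complex.I * (γ : ℂ) * (a : ℂ))) * v (a, b+1) 2)
    ∧
    (Q v) (a, b) 1 =
        Complex.exp (-(Complex.I * ((ω : ℂ) + (γ : ℂ)/8))) *
          (v (a-1, b) 0 +
            Complex.exp (Complex.I * (-((γ : ℂ)/2) - (γ : ℂ) * ((a : ℂ)-1))) * v (a-1, b+1) 0)
      + Complex.exp (Complex.I * ((ω : ℂ) + (γ : ℂ)/8)) *
          (Complex.exp (Complex.I * (-((γ : ℂ)/2) - (γ : ℂ) * ((a : ℂ)-1))) * v (a-1, b+1) 2 +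
            Complex.exp (-(Complex.I * (γ : ℂ) * (a : ℂ))) * v (a, b+1) 2)
    ∧
    (Q v) (a, b) 2 =
        Complex.exp (Complex.I * ((ω : ℂ) + (γ : ℂ)/8)) *
          (v (a-1, b) 0 + Complex.exp (Complex.I * (γ : ℂ) * (a : ℂ)) * v (a, b-1) 0)
      + Complex.exp (-(Complex.I * ((ω : ℂ) + (γ : ℂ)/8))) *
          (Complex.exp (Complex.I * (-((γ : ℂ)/2) + (γ : ℂ) * ((a : ℂ)+1))) * v (a+1, b-1) 1 +
            Complex.exp (Complex.I * (γ : ℂ) * (a : ℂ)) * v (a, b-1) 1)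

open scoped ENNReal Real

namespace lp

variable {ι 𝕜 E : Type*} [RCLike 𝕜] [NormedAddCommGroup E] [NormedSpace 𝕜 E] {p : ℝ≥0∞}

theorem memℓp_gauge (hp : 0 < p.toReal) (e : ι ≃ ι) (U : ι → E ≃ₗᵢ[𝕜] E)
    (v : lp (fun _ : ι => E) p) : Memℓp (fun x => U x (v (e x))) p :=
  memℓp_gen <| by
    simp only [LinearIsometryEquiv.norm_map]
    exact e.summable_iff.2 ((memℓp_gen_iff hp).1 v.2)

def gaugeLinearIsometry [Fact (1 ≤ p)] (hp : 0 < p.toReal) (e : ι ≃ ι)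
    (U : ι → E ≃ₗᵢ[𝕜] E) : lp (fun _ : ι => E) p →ₗᵢ[𝕜] lp (fun _ : ι => E) p where
  toFun v := ⟨fun x => U x (v (e x)), memℓp_gauge hp e U v⟩
  map_add' v w := by ext x; exact map_add (U x) _ _
  map_smul' c v := by ext x; exact map_smul (U x) _ _
  norm_map' v := by
    simp only [norm_eq_tsum_rpow hp, LinearMap.coe_mk, AddHom.coe_mk]
    congr 1
    simpa using e.tsum_eq fun x => ‖v x‖ ^ p.toReal

def gauge [Fact (1 ≤ p)] (hp : 0 < p.toReal) (e : ι ≃ ι) (U : ι → E ≃ₗᵢ[𝕜] E) :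
    lp (fun _ : ι => E) p ≃ₗᵢ[𝕜] lp (fun _ : ι => E) p :=
  { gaugeLinearIsometry hp e U with
    invFun := gaugeLinearIsometry hp e.symm fun x => (U (e.symm x)).symm
    left_inv v := by ext; simp [gaugeLinearIsometry]
    right_inv v := by ext; simp [gaugeLinearIsometry] }

@[simp] theorem gauge_apply [Fact (1 ≤ p)] (hp : 0 < p.toReal) (e : ι ≃ ι)
    (U : ι → E ≃ₗᵢ[𝕜] E) (v : lp (fun _ : ι => E) p) (x : ι) :
    gauge hp e U v x = U x (v (e x)) := rfl

end lp

namespace Kagome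

/-- The formula defining `Q_{γ,ω}`, on arbitrary functions and with `p = e^{i(ω+γ/8)}` and
`h = e^{iγ/2}` as parameters (see `IsKagome.isHop`). -/
def hop (p h : ℂ) (u : ℤ × ℤ → Fin 3 → ℂ) (x : ℤ × ℤ) : Fin 3 → ℂ :=
  let a := x.1; let b := x.2
  ![p * (u (a+1, b) 1 + h ^ (2*a+1) * u (a+1, b-1) 1) +
      p⁻¹ * (u (a+1, b) 2 + h ^ (-2*a) * u (a, b+1) 2),
    p⁻¹ * (u (a-1, b) 0 + h ^ (1-2*a) * u (a-1, b+1) 0) +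
      p * (h ^ (1-2*a) * u (a-1, b+1) 2 + h ^ (-2*a) * u (a, b+1) 2),
    p * (u (a-1, b) 0 + h ^ (2*a) * u (a, b-1) 0) +
      p⁻¹ * (h ^ (2*a+1) * u (a+1, b-1) 1 + h ^ (2*a) * u (a, b-1) 1)]

theorem hop_neg_neg (p h : ℂ) (u : ℤ × ℤ → Fin 3 → ℂ) :
    hop (-p) (-h) (fun x j => (-1) ^ (x.1 + x.2) * u x j) =
      fun x j => (-1) ^ (x.1 + x.2) * hop p h u x j := by
  ext ⟨a, b⟩ j
  have hm : (-1 : ℂ) ≠ 0 := by norm_num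
  have e₁ : (-h) ^ (2*a+1) = -h ^ (2*a+1) := Odd.neg_zpow ⟨a, rfl⟩ h
  have e₂ : (-h) ^ (1-2*a) = -h ^ (1-2*a) := Odd.neg_zpow ⟨-a, by ring⟩ h
  have e₃ : (-h) ^ (2*a) = h ^ (2*a) := Even.neg_zpow ⟨a, by ring⟩ h
  fin_cases j <;> simp [hop, e₁, e₂, e₃, zpow_add₀ hm, zpow_sub₀ hm] <;> ring

theorem hop_inv_inv (p h : ℂ) (hh : h ≠ 0) (u : ℤ × ℤ → Fin 3 → ℂ) :
    hop p⁻¹ h⁻¹ (fun x j => h ^ (-2 * (x.1 * x.2)) * u (-x.2, -x.1) (Equiv.swap 0 2 j)) =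
      fun x j => h ^ (-2 * (x.1 * x.2)) * hop p h u (-x.2, -x.1) (Equiv.swap 0 2 j) := by
  ext ⟨a, b⟩ j
  fin_cases j <;> simp [hop, Equiv.swap_apply_of_ne_of_ne] <;> ring_nf <;>
    simp only [zpow_add₀ hh, zpow_sub₀ hh, _root_.zpow_neg, _root_.zpow_mul] <;> field_simp
  ring

def IsHop (p h : ℂ) (Q : KH →L[ℂ] KH) : Prop :=
  ∀ v x j, Q v x j = hop p h (fun y k => v y k) x j

theorem IsHop.unique {p h : ℂ} {Q Q' : KH →L[ℂ] KH} (hQ : IsHop p h Q) (hQ' : IsHop p h Q') :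
    Q = Q' := by
  ext v x j
  rw [hQ, hQ']

def signGauge : KH ≃ₗᵢ[ℂ] KH :=
  lp.gauge (by norm_num) (Equiv.refl _) fun x => (-1 : unitary ℂ) ^ (x.1 + x.2) • .refl ℂ _

theorem signGauge_apply (v : KH) (x : ℤ × ℤ) (j : Fin 3) :
    signGauge v x j = (-1) ^ (x.1 + x.2) * v x j := by
  simp [signGauge, Unitary.coe_zpow, Unitary.coe_neg]

def reflectionGauge (h : unitary ℂ) : KH ≃ₗᵢ[ℂ] KH :=
  lp.gauge (by norm_num) (Function.Involutive.toPerm (fun x => (-x.2, -x.1)) fun _ => by simp)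
    fun x => h ^ (-2 * (x.1 * x.2)) • LinearIsometryEquiv.piLpCongrLeft 2 ℂ ℂ (Equiv.swap 0 2)

theorem reflectionGauge_apply (h : unitary ℂ) (v : KH) (x : ℤ × ℤ) (j : Fin 3) :
    reflectionGauge h v x j = (h : ℂ) ^ (-2 * (x.1 * x.2)) * v (-x.2, -x.1) (Equiv.swap 0 2 j) := by
  simp only [reflectionGauge, lp.gauge_apply, LinearIsometryEquiv.smul_apply, Unitary.coe_zpow]
  simp [Function.Involutive.toPerm]

theorem IsHop.conj_signGauge {p h : ℂ} {Q : KH →L[ℂ] KH} (hQ : IsHop p h Q) :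
    IsHop (-p) (-h) (signGauge.toContinuousLinearEquiv.conjContinuousAlgEquiv Q) := by
  intro v x j
  obtain ⟨w, rfl⟩ := signGauge.surjective v
  simp only [ContinuousLinearEquiv.conjContinuousAlgEquiv_apply_apply,
    LinearIsometryEquiv.coe_toContinuousLinearEquiv, LinearIsometryEquiv.coe_symm_toContinuousLinearEquiv,
    LinearIsometryEquiv.symm_apply_apply, signGauge_apply, hop_neg_neg]
  rw [hQ]

theorem IsHop.conj_reflectionGauge {p : ℂ} {h : unitary ℂ} {Q : KH →L[ℂ] KH}
    (hQ : IsHop p h Q) :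
    IsHop p⁻¹ (h : ℂ)⁻¹ ((reflectionGauge h).toContinuousLinearEquiv.conjContinuousAlgEquiv Q) := by
  intro v x j
  obtain ⟨w, rfl⟩ := (reflectionGauge h).surjective v
  simp only [ContinuousLinearEquiv.conjContinuousAlgEquiv_apply_apply,
    LinearIsometryEquiv.coe_toContinuousLinearEquiv, LinearIsometryEquiv.coe_symm_toContinuousLinearEquiv,
    LinearIsometryEquiv.symm_apply_apply, reflectionGauge_apply,
    hop_inv_inv p h Unitary.isUnit_coe.ne_zero fun y k => w y k]
  rw [hQ]

theorem IsHop.spectrum_eq_of_neg_one_zpow {p h : ℂ} {Q Q' : KH →L[ℂ] KH} (n : ℤ)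
    (hQ : IsHop p h Q) (hQ' : IsHop ((-1) ^ n * p) ((-1) ^ n * h) Q') :
    spectrum ℂ Q' = spectrum ℂ Q := by
  rcases n.even_or_odd with hn | hn
  · rw [hn.neg_one_zpow, one_mul, one_mul] at hQ'
    rw [hQ'.unique hQ]
  · rw [hn.neg_one_zpow, neg_one_mul, neg_one_mul] at hQ'
    rw [hQ'.unique hQ.conj_signGauge]
    exact AlgEquiv.spectrum_eq _ _

theorem IsHop.spectrum_eq_of_inv {p : ℂ} {h : unitary ℂ} {Q Q' : KH →L[ℂ] KH} (n : ℤ)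
    (hQ : IsHop p h Q) (hQ' : IsHop ((-1) ^ n * p⁻¹) ((-1) ^ n * (h : ℂ)⁻¹) Q') :
    spectrum ℂ Q' = spectrum ℂ Q :=
  (hQ.conj_reflectionGauge.spectrum_eq_of_neg_one_zpow n hQ').trans (AlgEquiv.spectrum_eq _ _)

def bondPhase (γ ω : ℝ) : ℂ := exp (I * (ω + γ / 8))

def halfFlux (γ : ℝ) : unitary ℂ :=
  ⟨exp (I * (γ / 2)), by
    rw [Unitary.mem_iff_star_mul_self, star_def, ← exp_conj, ← exp_add]
    simp [conj_ofReal, map_div₀, map_ofNat]⟩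

theorem halfFlux_zpow (γ : ℝ) (k : ℤ) : (halfFlux γ : ℂ) ^ k = exp (I * (k * γ / 2)) := by
  rw [halfFlux, ← exp_int_mul]
  ring_nf

theorem bondPhase_shift (γ ω : ℝ) (n : ℤ) :
    bondPhase (γ + 6 * n * π) (ω + n * (π / 4)) = (-1) ^ n * bondPhase γ ω := by
  rw [bondPhase, bondPhase, ← exp_pi_mul_I, ← exp_int_mul, ← exp_add]
  push_cast
  ring_nf

theorem halfFlux_shift (γ : ℝ) (n : ℤ) :
    (halfFlux (γ + 6 * n * π) : ℂ) = (-1) ^ n * halfFlux γ := by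
  rw [halfFlux, halfFlux, ← exp_pi_mul_I, ← exp_int_mul, ← exp_add]
  exact exp_eq_exp_iff_exists_int.2 ⟨n, by push_cast; ring⟩

theorem bondPhase_neg (γ ω : ℝ) : bondPhase (-γ) (-ω) = (bondPhase γ ω)⁻¹ := by
  rw [bondPhase, bondPhase, ← exp_neg]
  push_cast
  ring_nf

theorem halfFlux_neg (γ : ℝ) : (halfFlux (-γ) : ℂ) = (halfFlux γ : ℂ)⁻¹ := by
  rw [halfFlux, halfFlux, ← exp_neg]
  push_cast
  ring_nf

end Kagome

namespace IsKagome

open Kagome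

theorem isHop {γ ω : ℝ} {Q : KH →L[ℂ] KH} (hQ : IsKagome γ ω Q) :
    IsHop (bondPhase γ ω) (halfFlux γ) Q := by
  rintro v ⟨a, b⟩ j
  have hH (k : ℤ) {z : ℂ} (hz : z = I * (k * γ / 2)) : exp z = (halfFlux γ : ℂ) ^ k := by
    rw [hz, halfFlux_zpow]
  have e₁ := hH (2*a+1) (z := I * (-(γ/2) + γ*(a+1))) (by push_cast; ring)
  have e₂ := hH (1-2*a) (z := I * (-(γ/2) - γ*(a-1))) (by push_cast; ring)
  have e₃ := hH (2*a) (z := I * γ * a) (by push_cast; ring)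
  have e₄ := hH (-2*a) (z := -(I * γ * a)) (by push_cast; ring)
  obtain ⟨h0, h1, h2⟩ := hQ v a b
  simp only [e₁, e₂, e₃, e₄, exp_neg] at h0 h1 h2
  fin_cases j
  · exact h0
  · exact h1
  · exact h2

theorem spectrum_eq_of_shift {γ ω : ℝ} {Q Q' : KH →L[ℂ] KH} (n : ℤ)
    (hQ : IsKagome γ ω Q) (hQ' : IsKagome (γ + 6 * n * π) (ω + n * (π / 4)) Q') :
    spectrum ℂ Q' = spectrum ℂ Q := by
  have hop' := hQ'.isHop
  rw [bondPhase_shift, halfFlux_shift] at hop'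
  exact hQ.isHop.spectrum_eq_of_neg_one_zpow n hop'

theorem spectrum_eq_of_neg_shift {γ ω : ℝ} {Q Q' : KH →L[ℂ] KH} (n : ℤ)
    (hQ : IsKagome γ ω Q) (hQ' : IsKagome (-γ + 6 * n * π) (-ω + n * (π / 4)) Q') :
    spectrum ℂ Q' = spectrum ℂ Q := by
  have hop' := hQ'.isHop
  rw [bondPhase_shift, halfFlux_shift, bondPhase_neg, halfFlux_neg] at hop'
  exact hQ.isHop.spectrum_eq_of_inv n hop'

theorem exists_mem_Icc_spectrum_eq {γ ω : ℝ} {Q : KH →L[ℂ] KH} (hQ : IsKagome γ ω Q) :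
    ∃ γ', ∃ ω' ∈ Set.Icc 0 (π / 8), ∀ Q' : KH →L[ℂ] KH,
      IsKagome γ' ω' Q' → spectrum ℂ Q' = spectrum ℂ Q := by
  set n := ⌊ω / (π / 4)⌋
  have hπ : 0 < π / 4 := by positivity
  have h₀ : 0 ≤ ω - n * (π / 4) := Int.sub_floor_div_mul_nonneg ω hπ
  have h₁ : ω - n * (π / 4) < π / 4 := Int.sub_floor_div_mul_lt ω hπ
  by_cases hle : ω - n * (π / 4) ≤ π / 8
  · refine ⟨γ + 6 * (-n : ℤ) * π, ω + (-n : ℤ) * (π / 4), ⟨?_, ?_⟩,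
      fun Q' hQ' => hQ.spectrum_eq_of_shift (-n) hQ'⟩ <;> push_cast <;> linarith
  · refine ⟨-γ + 6 * (n + 1 : ℤ) * π, -ω + (n + 1 : ℤ) * (π / 4), ⟨?_, ?_⟩,
      fun Q' hQ' => hQ.spectrum_eq_of_neg_shift (n + 1) hQ'⟩ <;> push_cast <;> linarith

end IsKagome

theorem stmt10 (γ ω : ℝ) (Q₁ Q₂ Q₃ Q₄ : KH →L[ℂ] KH)
    (h₁ : IsKagome γ (ω + Real.pi / 4) Q₁)
    (h₂ : IsKagome (γ - 6 * Real.pi) ω Q₂)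
    (h₃ : IsKagome γ (-ω) Q₃)
    (h₄ : IsKagome (-γ) ω Q₄) :
    spectrum ℂ Q₁ = spectrum ℂ Q₂ ∧ spectrum ℂ Q₃ = spectrum ℂ Q₄
    -- consequently, to obtain all the spectra it suffices to consider `ω ∈ [0,π/8]`
    ∧ (∀ γ' ω' : ℝ, ∀ Q' : KH →L[ℂ] KH, IsKagome γ' ω' Q' →
        ∃ γ'' : ℝ, ∃ ω'' ∈ Set.Icc (0 : ℝ) (Real.pi / 8), ∀ Q'' : KH →L[ℂ] KH,
          IsKagome γ'' ω'' Q'' → spectrum ℂ Q'' = spectrum ℂ Q') := by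
  refine ⟨h₂.spectrum_eq_of_shift 1 ?_, (h₃.spectrum_eq_of_neg_shift 0 ?_).symm,
    fun _ _ _ hQ' => hQ'.exists_mem_Icc_spectrum_eq⟩
  · convert h₁ using 2 <;> push_cast <;> ring
  · simpa using h₄
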